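/- arXiv:2507.00349 — 6 statements merged into one kernel-verified Lean document; each statement's English description precedes it below -/
import Mathlib

section
/- Let V be a finite-dimensional complex vector space, j a linear endomorphism of V, and for k = 1,2 let V_k be a j-invariant subspace of the generalized eigenspace of j for the eigenvalue λ_k. Let B : V_1 × V_2 → ℂ be a bilinear map and let f_1,…,f_s, g_1,…,g_s be polynomials with ∑_{i=1}^s f_i(λ_1) g_i(λ_2) ≠ 0. If ∑_{i=1}^s B(f_i(j) v_1, g_i(j) v_2) = 0 for all v_1 ∈ V_1 and v_2 ∈ V_2, then B = 0. -/
/-- Lemma 2.1 (Lemma `zero`): if a bilinear form pairs generalized eigenspaces via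
polynomials in `j` and the scalar combination at the eigenvalues is nonzero, then it vanishes. -/
theorem stmt0 (V : Type*) [AddCommGroup V] [Module ℂ V] [FiniteDimensional ℂ V]
    (j : Module.End ℂ V) (lam₁ lam₂ : ℂ) (V₁ V₂ : Submodule ℂ V)
    (hV₁inv : ∀ v ∈ V₁, j v ∈ V₁) (hV₂inv : ∀ v ∈ V₂, j v ∈ V₂)
    (hV₁ : V₁ ≤ Module.End.maxGenEigenspace j lam₁)
    (hV₂ : V₂ ≤ Module.End.maxGenEigenspace j lam₂)
    (B : V →ₗ[ℂ] V →ₗ[ℂ] ℂ) (s : ℕ) (f g : Fin s → Polynomial ℂ)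
    (hfg : (∑ i, (f i).eval lam₁ * (g i).eval lam₂) ≠ 0)
    (hB : ∀ v₁ ∈ V₁, ∀ v₂ ∈ V₂,
      (∑ i, B ((Polynomial.aeval j (f i)) v₁) ((Polynomial.aeval j (g i)) v₂)) = 0) :
    ∀ v₁ ∈ V₁, ∀ v₂ ∈ V₂, B v₁ v₂ = 0 := by
  -- powers of j preserve invariant submodules
  have hpow : ∀ (W : Submodule ℂ V), (∀ v ∈ W, j v ∈ W) →
      ∀ (m : ℕ) (v : V), v ∈ W → (j ^ m) v ∈ W := by
    intro W hW m
    induction m with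
    | zero => intro v hv; simpa using hv
    | succ m ih =>
      intro v hv
      rw [pow_succ]
      exact ih _ (hW v hv)
  -- polynomials in j preserve invariant submodules
  have haev : ∀ (W : Submodule ℂ V), (∀ v ∈ W, j v ∈ W) →
      ∀ (p : Polynomial ℂ) (v : V), v ∈ W → (Polynomial.aeval j p) v ∈ W := by
    intro W hW p
    induction p using Polynomial.induction_on' with
    | add p q hp hq =>
      intro v hv
      rw [map_add, LinearMap.add_apply]
      exact W.add_mem (hp v hv) (hq v hv)
    | monomial n c =>
      intro v hv
      rw [Polynomial.aeval_monomial]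
      have : ((algebraMap ℂ (Module.End ℂ V)) c * j ^ n) v = c • ((j ^ n) v) := by
        simp [Module.algebraMap_end_eq_smul_id]
      rw [this]
      exact W.smul_mem _ (hpow W hW n v hv)
  -- (j - lam • 1) preserves invariant submodules
  have hsub : ∀ (W : Submodule ℂ V), (∀ v ∈ W, j v ∈ W) → ∀ (lam : ℂ) (v : V), v ∈ W →
      (j - lam • (1 : Module.End ℂ V)) v ∈ W := by
    intro W hW lam v hv
    have : (j - lam • (1 : Module.End ℂ V)) v = j v - lam • v := by
      simp [LinearMap.sub_apply]
    rw [this]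
    exact W.sub_mem (hW v hv) (W.smul_mem _ hv)
  -- commutation of aeval values
  have hcomm : ∀ (p q : Polynomial ℂ) (v : V),
      (Polynomial.aeval j p) ((Polynomial.aeval j q) v) =
      (Polynomial.aeval j q) ((Polynomial.aeval j p) v) := by
    intro p q v
    have : (Polynomial.aeval j p) * (Polynomial.aeval j q) =
        (Polynomial.aeval j q) * (Polynomial.aeval j p) := by
      rw [← map_mul, ← map_mul, mul_comm]
    calc (Polynomial.aeval j p) ((Polynomial.aeval j q) v)
        = ((Polynomial.aeval j p) * (Polynomial.aeval j q)) v := rfl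
      _ = ((Polynomial.aeval j q) * (Polynomial.aeval j p)) v := by rw [this]
      _ = _ := rfl
  have haev_sub : ∀ (lam : ℂ),
      Polynomial.aeval j (Polynomial.X - Polynomial.C lam) = j - lam • (1 : Module.End ℂ V) := by
    intro lam
    simp only [map_sub, Polynomial.aeval_X, Polynomial.aeval_C,
      Module.algebraMap_end_eq_smul_id]
    rfl
  -- main induction
  have key : ∀ (k a b : ℕ), a + b ≤ k → ∀ v₁ ∈ V₁, ∀ v₂ ∈ V₂,
      ((j - lam₁ • 1) ^ a) v₁ = 0 → ((j - lam₂ • 1) ^ b) v₂ = 0 → B v₁ v₂ = 0 := by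
    intro k
    induction k with
    | zero =>
      intro a b hab v₁ _ v₂ _ h1 _
      have ha : a = 0 := by omega
      subst ha
      simp only [pow_zero, Module.End.one_apply] at h1
      simp [h1]
    | succ k ih =>
      intro a b hab v₁ hv₁ v₂ hv₂ h1 h2
      rcases Nat.eq_zero_or_pos a with ha | ha
      · subst ha
        simp only [pow_zero, Module.End.one_apply] at h1
        simp [h1]
      rcases Nat.eq_zero_or_pos b with hb | hb
      · subst hb
        simp only [pow_zero, Module.End.one_apply] at h2
        simp [h2]
      -- decompose the polynomials
      choose h₁ hh₁ using fun i =>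
        (Polynomial.X_sub_C_dvd_sub_C_eval (a := lam₁) (p := f i))
      choose h₂ hh₂ using fun i =>
        (Polynomial.X_sub_C_dvd_sub_C_eval (a := lam₂) (p := g i))
      set N₁ : Module.End ℂ V := j - lam₁ • 1 with hN₁
      set N₂ : Module.End ℂ V := j - lam₂ • 1 with hN₂
      have hf : ∀ i, (Polynomial.aeval j (f i)) v₁ =
          ((f i).eval lam₁) • v₁ + N₁ ((Polynomial.aeval j (h₁ i)) v₁) := by
        intro i
        have : f i = Polynomial.C ((f i).eval lam₁) +
            (Polynomial.X - Polynomial.C lam₁) * h₁ i := by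
          rw [← hh₁ i]; ring
        rw [this, map_add, map_mul, haev_sub]
        simp [Module.algebraMap_end_eq_smul_id, hN₁]
      have hg : ∀ i, (Polynomial.aeval j (g i)) v₂ =
          ((g i).eval lam₂) • v₂ + N₂ ((Polynomial.aeval j (h₂ i)) v₂) := by
        intro i
        have : g i = Polynomial.C ((g i).eval lam₂) +
            (Polynomial.X - Polynomial.C lam₂) * h₂ i := by
          rw [← hh₂ i]; ring
        rw [this, map_add, map_mul, haev_sub]
        simp [Module.algebraMap_end_eq_smul_id, hN₂]
      -- memberships
      have hw₁mem : ∀ i, N₁ ((Polynomial.aeval j (h₁ i)) v₁) ∈ V₁ := fun i =>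
        hsub V₁ hV₁inv lam₁ _ (haev V₁ hV₁inv (h₁ i) v₁ hv₁)
      have hw₂mem : ∀ i, N₂ ((Polynomial.aeval j (h₂ i)) v₂) ∈ V₂ := fun i =>
        hsub V₂ hV₂inv lam₂ _ (haev V₂ hV₂inv (h₂ i) v₂ hv₂)
      -- nilpotency bounds
      have hw₁nil : ∀ i, (N₁ ^ (a - 1)) (N₁ ((Polynomial.aeval j (h₁ i)) v₁)) = 0 := by
        intro i
        have h1' : (N₁ ^ (a - 1)) (N₁ ((Polynomial.aeval j (h₁ i)) v₁)) =
            (N₁ ^ a) ((Polynomial.aeval j (h₁ i)) v₁) := by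
          have : N₁ ^ a = N₁ ^ (a - 1) * N₁ := by
            rw [← pow_succ]; congr 1; omega
          rw [this]; rfl
        rw [h1']
        have hNpow : (N₁ : Module.End ℂ V) ^ a =
            Polynomial.aeval j ((Polynomial.X - Polynomial.C lam₁) ^ a) := by
          rw [map_pow, haev_sub]
        rw [hNpow, hcomm, ← hNpow, h1, map_zero]
      have hw₂nil : ∀ i, (N₂ ^ (b - 1)) (N₂ ((Polynomial.aeval j (h₂ i)) v₂)) = 0 := by
        intro i
        have h2' : (N₂ ^ (b - 1)) (N₂ ((Polynomial.aeval j (h₂ i)) v₂)) =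
            (N₂ ^ b) ((Polynomial.aeval j (h₂ i)) v₂) := by
          have : N₂ ^ b = N₂ ^ (b - 1) * N₂ := by
            rw [← pow_succ]; congr 1; omega
          rw [this]; rfl
        rw [h2']
        have hNpow : (N₂ : Module.End ℂ V) ^ b =
            Polynomial.aeval j ((Polynomial.X - Polynomial.C lam₂) ^ b) := by
          rw [map_pow, haev_sub]
        rw [hNpow, hcomm, ← hNpow, h2, map_zero]
      -- expand each summand
      have hterm : ∀ i, B ((Polynomial.aeval j (f i)) v₁) ((Polynomial.aeval j (g i)) v₂) =
          ((f i).eval lam₁ * (g i).eval lam₂) • (B v₁ v₂) := by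
        intro i
        rw [hf i, hg i]
        have e1 : B v₁ (N₂ ((Polynomial.aeval j (h₂ i)) v₂)) = 0 :=
          ih a (b - 1) (by omega) v₁ hv₁ _ (hw₂mem i) h1 (hw₂nil i)
        have e2 : B (N₁ ((Polynomial.aeval j (h₁ i)) v₁)) v₂ = 0 :=
          ih (a - 1) b (by omega) _ (hw₁mem i) v₂ hv₂ (hw₁nil i) h2
        have e3 : B (N₁ ((Polynomial.aeval j (h₁ i)) v₁))
            (N₂ ((Polynomial.aeval j (h₂ i)) v₂)) = 0 :=
          ih (a - 1) (b - 1) (by omega) _ (hw₁mem i) _ (hw₂mem i) (hw₁nil i) (hw₂nil i)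
        simp only [map_add, map_smul, LinearMap.add_apply, LinearMap.smul_apply,
          e1, e2, e3, smul_zero, add_zero, mul_smul]
        module
      have := hB v₁ hv₁ v₂ hv₂
      rw [Finset.sum_congr rfl (fun i _ => hterm i), ← Finset.sum_smul] at this
      rcases smul_eq_zero.mp this with h | h
      · exact absurd h hfg
      · exact h
  intro v₁ hv₁ v₂ hv₂
  obtain ⟨a, ha⟩ := (Module.End.mem_maxGenEigenspace j lam₁ v₁).mp (hV₁ hv₁)
  obtain ⟨b, hb⟩ := (Module.End.mem_maxGenEigenspace j lam₂ v₂).mp (hV₂ hv₂)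
  exact key (a + b) a b le_rfl v₁ hv₁ v₂ hv₂ ha hb
end

section
/- For every integer i ≥ 2, the polynomial identity (−1)^{i−2}·binom(t−3, i−2) ≡ (binom(i,2) − binom(i+1,3))·t + binom(i,2) holds modulo the polynomial t² + t, where binom(t−3, i−2) denotes the polynomial (t−3)(t−4)⋯(t−3−(i−2)+1)/(i−2)! in ℂ[t]. -/
open Polynomial Finset in
lemma prod_add_three (n : ℕ) : ∏ j ∈ Finset.range n, (3 + (j : ℂ)) = (n + 2).factorial / 2 := by
  induction n with
  | zero => norm_num [Nat.factorial]
  | succ n ih =>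
      rw [Finset.prod_range_succ, ih]
      have h : ((n + 1 + 2).factorial : ℂ) = (n + 3) * (n + 2).factorial := by
        rw [show n + 1 + 2 = (n + 2) + 1 from rfl, Nat.factorial_succ]; push_cast; ring
      rw [h]; ring

open Polynomial Finset in
lemma prod_add_four (n : ℕ) : ∏ j ∈ Finset.range n, (4 + (j : ℂ)) = (n + 3).factorial / 6 := by
  induction n with
  | zero => norm_num [Nat.factorial]
  | succ n ih =>
      rw [Finset.prod_range_succ, ih]
      have h : ((n + 1 + 3).factorial : ℂ) = (n + 4) * (n + 3).factorial := by
        rw [show n + 1 + 3 = (n + 3) + 1 from rfl, Nat.factorial_succ]; push_cast; ring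
      rw [h]; ring

open Polynomial in
lemma key (n : ℕ) : (X ^ 2 + X : ℂ[X]) ∣
      ((-1 : ℂ) ^ n • ((Nat.factorial n : ℂ)⁻¹ •
          ∏ j ∈ Finset.range n, (X - C (3 + (j : ℂ))))
        - (C (((n + 2).choose 2 : ℂ) - ((n + 3).choose 3 : ℂ)) * X + C ((n + 2).choose 2 : ℂ))) := by
  set p : ℂ[X] := ((-1 : ℂ) ^ n • ((Nat.factorial n : ℂ)⁻¹ •
          ∏ j ∈ Finset.range n, (X - C (3 + (j : ℂ))))
        - (C (((n + 2).choose 2 : ℂ) - ((n + 3).choose 3 : ℂ)) * X + C ((n + 2).choose 2 : ℂ)))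
    with hp
  have hfac : (Nat.factorial n : ℂ) ≠ 0 := Nat.cast_ne_zero.2 n.factorial_ne_zero
  have c2 : ((n + 2).choose 2 : ℂ) = (n + 2).factorial / (2 * n.factorial) := by
    have := Nat.choose_mul_factorial_mul_factorial (show 2 ≤ n + 2 by omega)
    have h2 : ((n+2).choose 2 * Nat.factorial 2 * Nat.factorial (n + 2 - 2) : ℂ)
        = (n+2).factorial := by exact_mod_cast congrArg (Nat.cast : ℕ → ℂ) this
    simp only [show n + 2 - 2 = n from rfl, Nat.factorial] at h2 ⊢
    field_simp at h2 ⊢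
    linear_combination h2
  have c3 : ((n + 3).choose 3 : ℂ) = (n + 3).factorial / (6 * n.factorial) := by
    have := Nat.choose_mul_factorial_mul_factorial (show 3 ≤ n + 3 by omega)
    have h2 : ((n+3).choose 3 * Nat.factorial 3 * Nat.factorial (n + 3 - 3) : ℂ)
        = (n+3).factorial := by exact_mod_cast congrArg (Nat.cast : ℕ → ℂ) this
    simp only [show n + 3 - 3 = n from rfl, Nat.factorial] at h2 ⊢
    field_simp at h2 ⊢
    linear_combination h2
  have e0 : p.IsRoot 0 := by
    simp only [IsRoot, hp, eval_sub, eval_smul, eval_prod, eval_add, eval_mul, eval_X, eval_C,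
      smul_eq_mul]
    have : ∏ j ∈ Finset.range n, ((0 : ℂ) - (3 + (j : ℂ)))
        = (-1) ^ n * ∏ j ∈ Finset.range n, (3 + (j : ℂ)) := by
      rw [show ((-1 : ℂ)) ^ n = ∏ _x ∈ Finset.range n, (-1 : ℂ) by simp,
        ← Finset.prod_mul_distrib]
      exact Finset.prod_congr rfl fun j _ => by ring
    rw [this, prod_add_three, c2]
    have h1 : ((-1 : ℂ) ^ n) * ((-1 : ℂ) ^ n) = 1 := by
      rw [← pow_add, ← two_mul, pow_mul]; norm_num
    linear_combination ((n.factorial : ℂ)⁻¹ * ((n + 2).factorial / 2)) * h1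
  have e1 : p.IsRoot (-1) := by
    simp only [IsRoot, hp, eval_sub, eval_smul, eval_prod, eval_add, eval_mul, eval_X, eval_C,
      smul_eq_mul]
    have : ∏ j ∈ Finset.range n, ((-1 : ℂ) - (3 + (j : ℂ)))
        = (-1) ^ n * ∏ j ∈ Finset.range n, (4 + (j : ℂ)) := by
      rw [show ((-1 : ℂ)) ^ n = ∏ _x ∈ Finset.range n, (-1 : ℂ) by simp,
        ← Finset.prod_mul_distrib]
      exact Finset.prod_congr rfl fun j _ => by ring
    rw [this, prod_add_four, c2, c3]
    have h1 : ((-1 : ℂ) ^ n) * ((-1 : ℂ) ^ n) = 1 := by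
      rw [← pow_add, ← two_mul, pow_mul]; norm_num
    linear_combination ((n.factorial : ℂ)⁻¹ * ((n + 3).factorial / 6)) * h1
  have hcop : IsCoprime (X - C (0 : ℂ)) (X - C (-1 : ℂ)) :=
    isCoprime_X_sub_C_of_isUnit_sub (by norm_num)
  have hdvd0 : (X - C (0 : ℂ)) ∣ p := dvd_iff_isRoot.2 e0
  have hdvd1 : (X - C (-1 : ℂ)) ∣ p := dvd_iff_isRoot.2 e1
  have := hcop.mul_dvd hdvd0 hdvd1
  have hfactor : (X - C (0 : ℂ)) * (X - C (-1 : ℂ)) = X ^ 2 + X := by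
    rw [map_zero, map_neg, map_one]; ring
  rwa [hfactor] at this

open Polynomial in
/-- The polynomial identity
`(−1)^{i−2}·binom(t−3, i−2) ≡ (binom(i,2) − binom(i+1,3))·t + binom(i,2)  (mod t² + t)`
for every integer `i ≥ 2`, where `binom(t−3,k) = (t−3)(t−4)⋯(t−3−k+1)/k!` in `ℂ[t]`. -/
theorem stmt2 (i : ℕ) (hi : 2 ≤ i) :
    (X ^ 2 + X : ℂ[X]) ∣
      ((-1 : ℂ) ^ (i - 2) • ((Nat.factorial (i - 2) : ℂ)⁻¹ •
          ∏ j ∈ Finset.range (i - 2), (X - C (3 + (j : ℂ))))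
        - (C ((i.choose 2 : ℂ) - ((i + 1).choose 3 : ℂ)) * X + C (i.choose 2 : ℂ))) := by
  obtain ⟨n, rfl⟩ : ∃ n, i = n + 2 := ⟨i - 2, by omega⟩
  simpa [show n + 2 - 2 = n from rfl, show n + 2 + 1 = n + 3 from rfl] using key n
end

section
/- Let W be the Witt algebra with basis {l_i : i ∈ ℤ} and [l_i, l_j] = (j−i)l_{i+j}, let g be a finite-dimensional complex Lie algebra with a derivation d having no eigenvalue 1, and let L = W ⋉ (g ⊗ ℂ[t,t^{−1}]) with [l_i, x⊗t^a] = (a·x + i·d(x))⊗t^{i+a} and [x⊗t^a, y⊗t^b] = [x,y]⊗t^{a+b}. Then L is perfect: L = [L, L]. -/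
/-- The Lie algebra `L = W ⋉ (g ⊗ ℂ[t,t⁻¹])`, presented abstractly by generators
`l i` (Witt) and `G a x` (loop elements `x ⊗ t^a`) with the defining brackets, is
perfect when the derivation `d` of `g` has no eigenvalue `1`. -/
theorem stmt10 (g : Type*) [LieRing g] [LieAlgebra ℂ g] [FiniteDimensional ℂ g]
    (d : g →ₗ[ℂ] g) (hder : ∀ x y : g, d ⁅x, y⁆ = ⁅d x, y⁆ + ⁅x, d y⁆)
    (h1 : ∀ x : g, d x = x → x = 0)
    (L : Type*) [LieRing L] [LieAlgebra ℂ L]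
    (l : ℤ → L) (G : ℤ → g →ₗ[ℂ] L)
    (hW : ∀ i j : ℤ, ⁅l i, l j⁆ = ((j : ℂ) - (i : ℂ)) • l (i + j))
    (hWG : ∀ (i a : ℤ) (x : g), ⁅l i, G a x⁆ = G (a + i) ((a : ℂ) • x + (i : ℂ) • d x))
    (hGG : ∀ (a b : ℤ) (x y : g), ⁅G a x, G b y⁆ = G (a + b) ⁅x, y⁆)
    (hspan : Submodule.span ℂ (Set.range l ∪ {z : L | ∃ a : ℤ, ∃ x : g, z = G a x}) = ⊤) :
    Submodule.span ℂ {z : L | ∃ u v : L, z = ⁅u, v⁆} = ⊤ := by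
  rw [eq_top_iff, ← hspan, Submodule.span_le]
  rintro z (⟨i, rfl⟩ | ⟨a, x, rfl⟩)
  · -- Witt generators
    by_cases hi : i = 0
    · subst hi
      have key : ((2 : ℂ)⁻¹) • ⁅l (-1), l 1⁆ = l 0 := by
        rw [hW]
        norm_num [smul_smul]
      exact key ▸ Submodule.smul_mem _ _ (Submodule.subset_span ⟨_, _, rfl⟩)
    · have key : ((i : ℂ)⁻¹) • ⁅l 0, l i⁆ = l i := by
        rw [hW]
        simp only [Int.cast_zero, sub_zero, zero_add, smul_smul]
        rw [inv_mul_cancel₀ (Int.cast_ne_zero.2 hi), one_smul]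
      exact key ▸ Submodule.smul_mem _ _ (Submodule.subset_span ⟨_, _, rfl⟩)
  · -- loop generators
    by_cases ha : a = 0
    · subst ha
      -- d - 1 is injective, hence surjective
      have hinj : Function.Injective (d - (LinearMap.id : g →ₗ[ℂ] g)) := by
        rw [← LinearMap.ker_eq_bot, LinearMap.ker_eq_bot']
        intro y hy
        have : d y - y = 0 := by simpa using hy
        exact h1 y (by rw [sub_eq_zero] at this; exact this)
      have hsurj := LinearMap.injective_iff_surjective.mp hinj
      obtain ⟨y, hy⟩ := hsurj x
      have hy' : d y - y = x := by simpa using hy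
      have key : ⁅l 1, G (-1) y⁆ = G 0 x := by
        rw [hWG, show (-1 : ℤ) + 1 = 0 from by norm_num]
        congr 1
        rw [← hy']
        push_cast
        module
      exact key ▸ Submodule.subset_span ⟨_, _, rfl⟩
    · have key : ((a : ℂ)⁻¹) • ⁅l 0, G a x⁆ = G a x := by
        rw [hWG, show a + 0 = a from add_zero a]
        push_cast
        rw [zero_smul, add_zero, ← map_smul, smul_smul,
          inv_mul_cancel₀ (show (a : ℂ) ≠ 0 from Int.cast_ne_zero.mpr ha), one_smul]
      exact key ▸ Submodule.smul_mem _ _ (Submodule.subset_span ⟨_, _, rfl⟩)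
end

section
/- Let G be an additive group, L a finite-dimensional G-graded complex Lie algebra, and n a G-graded nilpotent ideal of L with n ⊆ [L, L]. Then for any finite-dimensional G-graded-simple L-module V (a nonzero G-graded module with no nontrivial G-graded submodule), n·V = 0. -/
open Module LinearMap LieModule

section Aux

variable {L : Type*} [LieRing L] [LieAlgebra ℂ L]
  {M : Type*} [AddCommGroup M] [Module ℂ M] [FiniteDimensional ℂ M]
  [LieRingModule L M] [LieModule ℂ L M]

/-- An element of the span of brackets acts with zero trace on any module. -/
lemma aux_trace_zero {x : L}
    (hxd : x ∈ Submodule.span ℂ {z : L | ∃ u v : L, z = ⁅u, v⁆}) :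
    LinearMap.trace ℂ M (LieModule.toEnd ℂ L M x) = 0 := by
  refine Submodule.span_induction ?_ ?_ ?_ ?_ hxd
  · rintro z ⟨u, v, rfl⟩
    letI : LieRing (Module.End ℂ M) := LieRing.ofAssociativeRing
    rw [LieHom.map_lie, Ring.lie_def, map_sub, LinearMap.trace_mul_comm, sub_self]
  · simp
  · intro a b _ _ ha hb; rw [map_add, map_add, ha, hb, add_zero]
  · intro t a _ ha; rw [map_smul, map_smul, ha, smul_zero]

/-- The invariance lemma (Humphreys 4.3-style trace argument): if `χ` is a weight of a
nilpotent ideal `n` admitting a genuine common eigenvector `v ≠ 0`, then `χ` vanishes on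
all brackets `⁅x₀, y⁆` with `x₀ ∈ n`, `y ∈ L`. -/
lemma aux_claim1 (n : LieIdeal ℂ L) [LieRing.IsNilpotent n]
    (χ : LieModule.Weight ℂ n M) {v : M} (hv0 : v ≠ 0)
    (hv : ∀ x : n, ⁅(x : L), v⁆ = χ x • v)
    (x₀ : n) (y : L) :
    χ ⟨⁅(x₀ : L), y⁆, lie_mem_left ℂ L n _ y x₀.2⟩ = 0 := by
  classical
  set f : Module.End ℂ M := LieModule.toEnd ℂ L M y with hf
  set U : ℕ → Submodule ℂ M :=
    fun k => Submodule.span ℂ ((fun i => (f ^ i) v) '' Set.Iio k) with hU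
  have hUmono : Monotone U := fun a b hab =>
    Submodule.span_mono (Set.image_mono fun i (hi : i < a) => lt_of_lt_of_le hi hab)
  have hgen : ∀ i k, i < k → (f ^ i) v ∈ U k := fun i k hik =>
    Submodule.subset_span ⟨i, hik, rfl⟩
  have hfU : ∀ k, ∀ m ∈ U k, f m ∈ U (k + 1) := by
    intro k m hm
    refine Submodule.span_induction (p := fun m _ => f m ∈ U (k + 1)) ?_ ?_ ?_ ?_ hm
    · rintro z ⟨i, hi, rfl⟩
      have h2 : (f ^ (i + 1)) v = f ((f ^ i) v) := by
        rw [pow_succ', Module.End.mul_apply]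
      simpa [h2] using hgen (i + 1) (k + 1) (by simpa using hi)
    · simpa using (U (k + 1)).zero_mem
    · intro a b _ _ ha hb; rw [map_add]; exact (U (k + 1)).add_mem ha hb
    · intro t a _ ha; rw [map_smul]; exact (U (k + 1)).smul_mem t ha
  have key : ∀ (x : n) (k : ℕ), ⁅(x : L), (f ^ k) v⁆ - χ x • (f ^ k) v ∈ U k := by
    intro x k
    induction k generalizing x with
    | zero =>
      rw [pow_zero, Module.End.one_apply, hv x, sub_self]
      exact (U 0).zero_mem
    | succ k ih =>
      have hzmem : ⁅(x : L), y⁆ ∈ n := lie_mem_left ℂ L n _ _ x.2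
      set z : n := ⟨⁅(x : L), y⁆, hzmem⟩ with hzdef
      have hw : (f ^ (k + 1)) v = ⁅y, (f ^ k) v⁆ := by
        rw [pow_succ', Module.End.mul_apply, LieModule.toEnd_apply_apply]
      have e1 : ⁅(x : L), (f ^ (k + 1)) v⁆ - χ x • (f ^ (k + 1)) v
          = ((⁅(z : L), (f ^ k) v⁆ - χ z • (f ^ k) v) + χ z • (f ^ k) v)
            + f (⁅(x : L), (f ^ k) v⁆ - χ x • (f ^ k) v) := by
        rw [hw, leibniz_lie]
        simp only [map_sub, map_smul, LieModule.toEnd_apply_apply, hf]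
        abel
      rw [e1]
      refine (U (k + 1)).add_mem ((U (k + 1)).add_mem ?_ ?_) ?_
      · exact hUmono (Nat.le_succ k) (ih z)
      · exact (U (k + 1)).smul_mem _ (hgen k (k + 1) (Nat.lt_succ_self k))
      · exact hfU k _ (ih x)
  have key2 : ∀ (x : n) (k j : ℕ), (∀ i, i < k → i ≤ j) →
      ∀ m ∈ U k, ⁅(x : L), m⁆ - χ x • m ∈ U j := by
    intro x k j hkj m hm
    refine Submodule.span_induction (p := fun m _ => ⁅(x : L), m⁆ - χ x • m ∈ U j)
      ?_ ?_ ?_ ?_ hm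
    · rintro z ⟨i, hi, rfl⟩
      exact hUmono (hkj i hi) (key x i)
    · simpa using (U j).zero_mem
    · intro a b _ _ ha hb
      have e : ⁅(x : L), a + b⁆ - χ x • (a + b)
          = (⁅(x : L), a⁆ - χ x • a) + (⁅(x : L), b⁆ - χ x • b) := by
        rw [lie_add, smul_add]; abel
      rw [e]; exact (U j).add_mem ha hb
    · intro t a _ ha
      have e : ⁅(x : L), t • a⁆ - χ x • (t • a) = t • (⁅(x : L), a⁆ - χ x • a) := by
        rw [lie_smul, smul_sub, smul_comm]
      rw [e]; exact (U j).smul_mem t ha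
  obtain ⟨K, hK⟩ := monotone_stabilizes_iff_noetherian.mpr
    (inferInstance : IsNoetherian ℂ M) ⟨U, hUmono⟩
  set W : Submodule ℂ M := U K with hWdef
  have hUK : U (K + 1) = W := (hK (K + 1) (Nat.le_succ K)).symm
  have hvW : v ∈ W := by
    have h0 : (f ^ 0) v ∈ U (K + 1) := hgen 0 (K + 1) (Nat.succ_pos K)
    rw [pow_zero, Module.End.one_apply] at h0
    rw [← hUK]; exact h0
  have hfW : ∀ m ∈ W, f m ∈ W := fun m hm => by
    rw [← hUK]; exact hfU K m hm
  have hxW : ∀ x : n, ∀ m ∈ W, ⁅(x : L), m⁆ ∈ W := by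
    intro x m hm
    have h1 := key2 x K K (fun i hi => le_of_lt hi) m hm
    have e : ⁅(x : L), m⁆ = (⁅(x : L), m⁆ - χ x • m) + χ x • m := by abel
    rw [e]; exact W.add_mem h1 (W.smul_mem _ hm)
  have hxW' : ∀ x : n, ∀ m ∈ W, (LieModule.toEnd ℂ L M (x : L)) m ∈ W := fun x m hm => by
    simpa [LieModule.toEnd_apply_apply] using hxW x m hm
  -- trace of restriction of an ideal element
  have htrace : ∀ x : n,
      LinearMap.trace ℂ W ((LieModule.toEnd ℂ L M (x : L)).restrict (hxW' x))
        = (finrank ℂ W : ℂ) * χ x := by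
    intro x
    set g : Module.End ℂ W := (LieModule.toEnd ℂ L M (x : L)).restrict (hxW' x) with hg
    set Nn : Module.End ℂ W := g - χ x • 1 with hNn
    have hNnil : ∀ (k : ℕ) (w : W), (w : M) ∈ U k → (Nn ^ k) w = 0 := by
      intro k
      induction k with
      | zero =>
        intro w hw
        have hU0 : U 0 = ⊥ := by
          have hio : Set.Iio (0 : ℕ) = ∅ := by ext i; simp
          rw [hU]
          simp [hio]
        rw [hU0, Submodule.mem_bot] at hw
        have : w = 0 := Subtype.ext hw
        simp [this]
      | succ k ih =>
        intro w hw
        have hNw : ((Nn w : W) : M) ∈ U k := by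
          have e : ((Nn w : W) : M) = ⁅(x : L), (w : M)⁆ - χ x • (w : M) := by
            simp [hNn, hg, LinearMap.restrict_coe_apply, LieModule.toEnd_apply_apply]
          rw [e]
          exact key2 x (k + 1) k (fun i hi => Nat.lt_succ_iff.mp hi) _ hw
        rw [pow_succ, Module.End.mul_apply]
        exact ih _ hNw
    have hNnil' : IsNilpotent Nn := by
      refine ⟨K, ?_⟩
      ext w
      exact congrArg Subtype.val (hNnil K w w.2)
    have hge : g = Nn + χ x • 1 := by rw [hNn]; abel
    rw [hge, map_add, map_smul, LinearMap.trace_one,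
      (LinearMap.isNilpotent_trace_of_isNilpotent hNnil').eq_zero, zero_add,
      smul_eq_mul, mul_comm]
  -- now the commutator trace is zero
  have hzmem : ⁅(x₀ : L), y⁆ ∈ n := lie_mem_left ℂ L n _ y x₀.2
  set z : n := ⟨⁅(x₀ : L), y⁆, hzmem⟩ with hzdef
  have hfW' : ∀ m ∈ W, f m ∈ W := hfW
  have hrepr : (LieModule.toEnd ℂ L M (z : L)).restrict (hxW' z)
      = ((LieModule.toEnd ℂ L M (x₀ : L)).restrict (hxW' x₀)) ∘ₗ (f.restrict hfW')
        - (f.restrict hfW') ∘ₗ ((LieModule.toEnd ℂ L M (x₀ : L)).restrict (hxW' x₀)) := by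
    ext w
    simp only [LinearMap.sub_apply, LinearMap.comp_apply, AddSubgroupClass.coe_sub,
      LinearMap.restrict_coe_apply, LieModule.toEnd_apply_apply, hf]
    exact lie_lie _ _ _
  have htr := htrace z
  rw [hrepr, map_sub] at htr
  have hcomm : LinearMap.trace ℂ W
        (((LieModule.toEnd ℂ L M (x₀ : L)).restrict (hxW' x₀)) ∘ₗ (f.restrict hfW'))
      = LinearMap.trace ℂ W
        ((f.restrict hfW') ∘ₗ ((LieModule.toEnd ℂ L M (x₀ : L)).restrict (hxW' x₀))) :=
    LinearMap.trace_mul_comm ℂ _ _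
  rw [hcomm, sub_self] at htr
  have hWnontriv : Nontrivial W :=
    nontrivial_of_ne ⟨v, hvW⟩ 0 (fun h => hv0 (by simpa [Subtype.ext_iff] using h))
  have hfr : (finrank ℂ W : ℂ) ≠ 0 := by
    exact_mod_cast Nat.cast_ne_zero.mpr (Module.finrank_pos).ne'
  have : χ z = 0 := by
    rcases mul_eq_zero.mp htr.symm with h | h
    · exact absurd h hfr
    · exact h
  exact this

/-- A nilpotent ideal contained in the span of brackets annihilates any
finite-dimensional simple module. -/
lemma aux_simple (n : LieIdeal ℂ L) [LieRing.IsNilpotent n] [Nontrivial M]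
    (hM : ∀ N : LieSubmodule ℂ L M, N = ⊥ ∨ N = ⊤)
    {x : L} (hx : x ∈ n)
    (hxd : x ∈ Submodule.span ℂ {z : L | ∃ u v : L, z = ⁅u, v⁆}) :
    ∀ m : M, ⁅x, m⁆ = 0 := by
  have hne : Nonempty (LieModule.Weight ℂ n M) := by
    by_contra h
    rw [not_nonempty_iff] at h
    have h2 := LieModule.iSup_genWeightSpace_eq_top' ℂ n M
    rw [iSup_of_empty] at h2
    obtain ⟨u, hu⟩ := exists_ne (0 : M)
    have : u ∈ (⊥ : LieSubmodule ℂ n M) := h2 ▸ LieSubmodule.mem_top u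
    exact hu ((LieSubmodule.mem_bot u).mp this)
  obtain ⟨χ⟩ := hne
  obtain ⟨v, hv0, hv⟩ := LieModule.exists_forall_lie_eq_smul (R := ℂ) (L := n) (M := M) χ
  have hv' : ∀ x' : n, ⁅(x' : L), v⁆ = χ x' • v := fun x' => by
    rw [← LieIdeal.coe_bracket_of_module]; exact hv x'
  have claim1 := fun (x' : n) (y : L) => aux_claim1 n χ hv0 hv' x' y
  let NN : LieSubmodule ℂ L M :=
    { carrier := {m | ∀ x' : n, ⁅(x' : L), m⁆ = χ x' • m}
      add_mem' := fun {a b} ha hb x' => by rw [lie_add, ha x', hb x', smul_add]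
      zero_mem' := fun x' => by rw [lie_zero, smul_zero]
      smul_mem' := fun t a ha x' => by rw [lie_smul, ha x', smul_comm]
      lie_mem := fun {y m} hm x' => by
        have h1 : ⁅(x' : L), ⁅y, m⁆⁆ = ⁅⁅(x' : L), y⁆, m⁆ + ⁅y, ⁅(x' : L), m⁆⁆ :=
          leibniz_lie _ _ _
        have h2 : ⁅⁅(x' : L), y⁆, m⁆
            = χ ⟨⁅(x' : L), y⁆, lie_mem_left ℂ L n _ _ x'.2⟩ • m :=
          hm ⟨⁅(x' : L), y⁆, lie_mem_left ℂ L n _ _ x'.2⟩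
        rw [h1, h2, claim1 x' y, zero_smul, zero_add, hm x', lie_smul] }
  have hvNN : v ∈ NN := hv'
  have hNNne : NN ≠ ⊥ := by
    intro h
    rw [h, LieSubmodule.mem_bot] at hvNN
    exact hv0 hvNN
  have hNNtop : NN = ⊤ := (hM NN).resolve_left hNNne
  have hall : ∀ (m : M) (x' : n), ⁅(x' : L), m⁆ = χ x' • m := by
    intro m x'
    have : m ∈ NN := by rw [hNNtop]; exact LieSubmodule.mem_top m
    exact this x'
  have htr0 : LinearMap.trace ℂ M (LieModule.toEnd ℂ L M x) = 0 := aux_trace_zero hxd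
  have hscal : LieModule.toEnd ℂ L M x = χ ⟨x, hx⟩ • 1 := by
    ext m
    simp only [LieModule.toEnd_apply_apply, LinearMap.smul_apply, Module.End.one_apply]
    exact hall m ⟨x, hx⟩
  rw [hscal, map_smul, LinearMap.trace_one, smul_eq_mul] at htr0
  have hfr : (finrank ℂ M : ℂ) ≠ 0 := Nat.cast_ne_zero.mpr (Module.finrank_pos).ne'
  have hχ0 : χ ⟨x, hx⟩ = 0 := by
    rcases mul_eq_zero.mp htr0 with h | h
    · exact h
    · exact absurd h hfr
  intro m
  have := hall m ⟨x, hx⟩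
  rw [hχ0, zero_smul] at this
  exact this

end Aux

/-- A `G`-graded nilpotent ideal `n ⊆ [L,L]` of a finite-dimensional `G`-graded complex Lie
algebra annihilates every finite-dimensional `G`-graded-simple `L`-module. -/
theorem stmt11 (G : Type*) [AddCommGroup G] [DecidableEq G] (L : Type*) [LieRing L] [LieAlgebra ℂ L]
    [FiniteDimensional ℂ L]
    (𝒢 : G → Submodule ℂ L) (hLgr : DirectSum.IsInternal 𝒢)
    (hLbr : ∀ (a b : G), ∀ x ∈ 𝒢 a, ∀ y ∈ 𝒢 b, ⁅x, y⁆ ∈ 𝒢 (a + b))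
    (n : LieIdeal ℂ L) (hnil : LieRing.IsNilpotent n)
    (hngr : n.toSubmodule = ⨆ a : G, n.toSubmodule ⊓ 𝒢 a)
    (hnderived : ∀ x ∈ n, x ∈ Submodule.span ℂ {z : L | ∃ u v : L, z = ⁅u, v⁆})
    (V : Type*) [AddCommGroup V] [Module ℂ V] [FiniteDimensional ℂ V]
    [LieRingModule L V] [LieModule ℂ L V] [Nontrivial V]
    (𝒱 : G → Submodule ℂ V) (hVgr : DirectSum.IsInternal 𝒱)
    (hVbr : ∀ (a b : G), ∀ x ∈ 𝒢 a, ∀ v ∈ 𝒱 b, ⁅x, v⁆ ∈ 𝒱 (a + b))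
    (hsimple : ∀ U : LieSubmodule ℂ L V,
      (U.toSubmodule = ⨆ a : G, U.toSubmodule ⊓ 𝒱 a) → U = ⊥ ∨ U = ⊤) :
    ∀ x ∈ n, ∀ v : V, ⁅x, v⁆ = 0 := by
  classical
  haveI := hnil
  -- the joint kernel of `n` on `V`
  let W : LieSubmodule ℂ L V :=
    { carrier := {v | ∀ x ∈ n, ⁅x, v⁆ = 0}
      add_mem' := fun {a b} ha hb x hx => by rw [lie_add, ha x hx, hb x hx, add_zero]
      zero_mem' := fun x hx => lie_zero x
      smul_mem' := fun t a ha x hx => by rw [lie_smul, ha x hx, smul_zero]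
      lie_mem := fun {y m} hm x hx => by
        rw [leibniz_lie, hm _ (lie_mem_left ℂ L n x y hx), hm x hx, lie_zero, add_zero] }
  have hWmem : ∀ v : V, v ∈ W ↔ ∀ x ∈ n, ⁅x, v⁆ = 0 := fun v => Iff.rfl
  -- Step 1 : W ≠ ⊥, via a minimal nonzero Lie submodule
  have hex : ∃ k, ∃ S : LieSubmodule ℂ L V, S ≠ ⊥ ∧ finrank ℂ S.toSubmodule = k := by
    refine ⟨_, ⊤, ?_, rfl⟩
    intro h
    obtain ⟨u, hu⟩ := exists_ne (0 : V)
    have : u ∈ (⊥ : LieSubmodule ℂ L V) := h ▸ LieSubmodule.mem_top u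
    exact hu ((LieSubmodule.mem_bot u).mp this)
  obtain ⟨S, hSne, hSrank⟩ := Nat.find_spec hex
  haveI : Nontrivial S := (LieSubmodule.nontrivial_iff_ne_bot ℂ L V).mpr hSne
  have hSsimple : ∀ N : LieSubmodule ℂ L S, N = ⊥ ∨ N = ⊤ := by
    intro N
    rcases eq_or_ne N ⊥ with h | h
    · exact Or.inl h
    · right
      let T : LieSubmodule ℂ L V :=
        { N.toSubmodule.map S.toSubmodule.subtype with
          lie_mem := by
            rintro y m hm
            change m ∈ N.toSubmodule.map S.toSubmodule.subtype at hm
            change ⁅y, m⁆ ∈ N.toSubmodule.map S.toSubmodule.subtype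
            simp only [Submodule.mem_map] at hm ⊢
            obtain ⟨w, hw, rfl⟩ := hm
            exact ⟨(⁅y, (show S from w)⁆ : S), N.lie_mem hw, rfl⟩ }
      have hTsub : T.toSubmodule = N.toSubmodule.map S.toSubmodule.subtype := rfl
      have hNsub : N.toSubmodule ≠ ⊥ := by
        intro hb
        apply h
        ext m
        rw [LieSubmodule.mem_bot]
        constructor
        · intro hm
          have : m ∈ N.toSubmodule := hm
          rw [hb] at this
          simpa using this
        · rintro rfl; exact N.zero_mem
      obtain ⟨w, hwN, hw0⟩ := Submodule.exists_mem_ne_zero_of_ne_bot hNsub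
      have hTne : T ≠ ⊥ := by
        intro hb
        have : (w : V) ∈ T := ⟨w, hwN, rfl⟩
        rw [hb, LieSubmodule.mem_bot] at this
        exact hw0 (by exact_mod_cast Subtype.ext this)
      have hk1 : Nat.find hex ≤ finrank ℂ T.toSubmodule :=
        Nat.find_min' hex ⟨T, hTne, rfl⟩
      have h2 : finrank ℂ T.toSubmodule = finrank ℂ N.toSubmodule := by
        rw [hTsub]; exact Submodule.finrank_map_subtype_eq S.toSubmodule N.toSubmodule
      have h3 : finrank ℂ N.toSubmodule ≤ finrank ℂ S := Submodule.finrank_le _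
      have h4 : finrank ℂ S.toSubmodule = finrank ℂ S := rfl
      have h5 : finrank ℂ N.toSubmodule = finrank ℂ S := by
        refine le_antisymm h3 ?_
        rw [← h4, hSrank, ← h2]
        exact hk1
      have := Submodule.eq_top_of_finrank_eq h5
      rwa [← LieSubmodule.toSubmodule_eq_top]
  have hSann : ∀ x ∈ n, ∀ m : S, ⁅x, m⁆ = (0 : S) := fun x hx m =>
    aux_simple n hSsimple hx (hnderived x hx) m
  have hWne : W ≠ ⊥ := by
    have hSsub : S.toSubmodule ≠ ⊥ := by
      intro hb
      apply hSne
      ext m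
      rw [LieSubmodule.mem_bot]
      constructor
      · intro hm
        have : m ∈ S.toSubmodule := hm
        rw [hb] at this
        simpa using this
      · rintro rfl; exact S.zero_mem
    obtain ⟨w, hwS, hw0⟩ := Submodule.exists_mem_ne_zero_of_ne_bot hSsub
    have hwW : w ∈ W := by
      intro x hx
      have h1 := hSann x hx ⟨w, hwS⟩
      have h2 := congrArg (Subtype.val) h1
      simpa using h2
    intro hb
    rw [hb, LieSubmodule.mem_bot] at hwW
    exact hw0 hwW
  -- Step 2 : W is graded
  haveI : DirectSum.Decomposition 𝒱 := hVgr.chooseDecomposition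
  have hhom : ∀ v : V, v ∈ W → ∀ a : G, ((DirectSum.decompose 𝒱 v a : 𝒱 a) : V) ∈ W := by
    intro v hv a
    intro x hxn
    set va : V := ((DirectSum.decompose 𝒱 v a : 𝒱 a) : V) with hva
    let φ : L →ₗ[ℂ] V :=
      { toFun := fun z => ⁅z, va⁆
        map_add' := fun z w => add_lie z w va
        map_smul' := fun t z => smul_lie t z va }
    have hxspan : x ∈ (⨆ b : G, n.toSubmodule ⊓ 𝒢 b) := by rw [← hngr]; exact hxn
    suffices hsub : (⨆ b : G, n.toSubmodule ⊓ 𝒢 b) ≤ LinearMap.ker φ by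
      have := hsub hxspan
      simpa [φ] using this
    refine iSup_le fun b z hz => ?_
    obtain ⟨hzn, hzb⟩ := hz
    simp only [LinearMap.mem_ker]
    show ⁅z, va⁆ = 0
    have hzv : ⁅z, v⁆ = 0 := hv z hzn
    by_cases ha : a ∈ (DirectSum.decompose 𝒱 v).support
    · -- decompose the identity `⁅z, v⁆ = 0`
      have hsum : v = ∑ c ∈ (DirectSum.decompose 𝒱 v).support,
          ((DirectSum.decompose 𝒱 v c : 𝒱 c) : V) :=
        (DirectSum.sum_support_decompose 𝒱 v).symm
      have h0 : (0 : V) = ∑ c ∈ (DirectSum.decompose 𝒱 v).support,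
          ⁅z, ((DirectSum.decompose 𝒱 v c : 𝒱 c) : V)⁆ := by
        rw [← hzv]
        conv_lhs => rw [hsum]
        rw [show ∀ (s : Finset G) (g : G → V), ⁅z, ∑ c ∈ s, g c⁆ = ∑ c ∈ s, ⁅z, g c⁆ from
          fun s g => by
            rw [show ⁅z, ∑ c ∈ s, g c⁆ = LieModule.toEnd ℂ L V z (∑ c ∈ s, g c) from rfl,
              map_sum]
            simp [LieModule.toEnd_apply_apply]]
      have key : ∀ c, ((DirectSum.decompose 𝒱
            (⁅z, ((DirectSum.decompose 𝒱 v c : 𝒱 c) : V)⁆) (b + a) : 𝒱 (b + a)) : V)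
          = if c = a then ⁅z, va⁆ else 0 := by
        intro c
        have hmem : ⁅z, ((DirectSum.decompose 𝒱 v c : 𝒱 c) : V)⁆ ∈ 𝒱 (b + c) :=
          hVbr b c z hzb _ (DirectSum.decompose 𝒱 v c).2
        by_cases hc : c = a
        · subst hc
          rw [if_pos rfl, DirectSum.decompose_of_mem_same 𝒱 hmem]
        · rw [if_neg hc]
          exact DirectSum.decompose_of_mem_ne 𝒱 hmem
            (fun hcontr => hc (by exact add_left_cancel hcontr))
      have h1 := congrArg (fun u : V => ((DirectSum.decompose 𝒱 u (b + a) : 𝒱 (b + a)) : V)) h0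
      simp only at h1
      rw [DirectSum.decompose_zero] at h1
      have h2 : ((DirectSum.decompose 𝒱
            (∑ c ∈ (DirectSum.decompose 𝒱 v).support,
              ⁅z, ((DirectSum.decompose 𝒱 v c : 𝒱 c) : V)⁆) (b + a) : 𝒱 (b + a)) : V)
          = ∑ c ∈ (DirectSum.decompose 𝒱 v).support,
            ((DirectSum.decompose 𝒱
              (⁅z, ((DirectSum.decompose 𝒱 v c : 𝒱 c) : V)⁆) (b + a) : 𝒱 (b + a)) : V) := by
        rw [DirectSum.decompose_sum, DFinsupp.finset_sum_apply]
        exact AddSubmonoidClass.coe_finset_sum _ _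
      rw [h2] at h1
      simp only [key] at h1
      rw [Finset.sum_ite_eq' _ a (fun _ => ⁅z, va⁆), if_pos ha] at h1
      · exact h1.symm
    · have hz0 : DirectSum.decompose 𝒱 v a = 0 := DFinsupp.notMem_support_iff.mp ha
      rw [hva, hz0]
      simp
  have hWgr : W.toSubmodule = ⨆ a : G, W.toSubmodule ⊓ 𝒱 a := by
    refine le_antisymm ?_ (iSup_le fun a => inf_le_left)
    intro v hv
    have hsum : v = ∑ c ∈ (DirectSum.decompose 𝒱 v).support,
        ((DirectSum.decompose 𝒱 v c : 𝒱 c) : V) :=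
      (DirectSum.sum_support_decompose 𝒱 v).symm
    rw [hsum]
    refine Submodule.sum_mem _ fun c _ => ?_
    refine Submodule.mem_iSup_of_mem c ?_
    exact ⟨hhom v hv c, (DirectSum.decompose 𝒱 v c).2⟩
  rcases hsimple W hWgr with h | h
  · exact absurd h hWne
  · intro x hx v
    have hvW : v ∈ W := by rw [h]; exact LieSubmodule.mem_top v
    exact hvW x hx
end

section
/- Let α be a skew-symmetric bilinear form on the Witt algebra W (basis l_i, i ∈ ℤ, with [l_i,l_j]=(j−i)l_{i+j}) satisfying the 2-cocycle condition α(l_i,[l_j,l_k]) = α([l_i,l_j],l_k) + α(l_j,[l_i,l_k]), and suppose additionally that α(l_0, l_j) = 0 for all j ≠ 0 and α(l_1, l_{−1}) = 0. Then α(l_i, l_j) = 0 whenever i + j ≠ 0, and α(l_i, l_{−i}) = (i³ − i)·c for all i ∈ ℤ, where c = α(l_2, l_{−2})/6. -/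
/-- A normalized 2-cocycle on the Witt algebra (given by its values `α i j = α(l_i, l_j)` on
the basis) vanishes for `i + j ≠ 0` and equals `(i³ − i)·α(l_2,l_{−2})/6` on the diagonal. -/
theorem stmt16 (α : ℤ → ℤ → ℂ)
    (hskew : ∀ i j : ℤ, α i j = -α j i)
    (hcoc : ∀ i j k : ℤ,
      ((k : ℂ) - (j : ℂ)) * α i (j + k)
        = ((j : ℂ) - (i : ℂ)) * α (i + j) k + ((k : ℂ) - (i : ℂ)) * α j (i + k))
    (hnorm : ∀ j : ℤ, j ≠ 0 → α 0 j = 0)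
    (h11 : α 1 (-1) = 0) :
    (∀ i j : ℤ, i + j ≠ 0 → α i j = 0) ∧
      ∀ i : ℤ, α i (-i) = ((i : ℂ) ^ 3 - (i : ℂ)) * (α 2 (-2) / 6) := by
  set c : ℂ := α 2 (-2) / 6 with hc
  have h00 : α 0 0 = 0 := by linear_combination (hskew 0 0) / 2
  -- off-diagonal vanishing
  have part1 : ∀ i j : ℤ, i + j ≠ 0 → α i j = 0 := by
    intro i j hij
    have h := hcoc 0 i j
    rw [zero_add, zero_add, hnorm (i + j) hij] at h
    push_cast at h
    have hne : (i : ℂ) + (j : ℂ) ≠ 0 := by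
      have : ((i + j : ℤ) : ℂ) ≠ 0 := by exact_mod_cast hij
      push_cast at this; exact this
    have h' : ((i : ℂ) + j) * α i j = 0 := by linear_combination -h
    rcases mul_eq_zero.mp h' with h'' | h''
    · exact absurd h'' hne
    · exact h''
  -- the recursion
  have hm11 : α (-1) 1 = 0 := by rw [hskew (-1) 1, h11, neg_zero]
  have hrec : ∀ j : ℤ, ((j : ℂ) + 2) * α j (-j) + (1 - (j : ℂ)) * α (j + 1) (-(j + 1)) = 0 := by
    intro j
    have h := hcoc (-1) (j + 1) (-j)
    have e1 : (-1 : ℤ) + (j + 1) = j := by ring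
    have e2 : (j + 1 : ℤ) + -j = 1 := by ring
    have e3 : (-1 : ℤ) + -j = -(j + 1) := by ring
    rw [e1, e2, e3, hm11] at h
    push_cast at h
    linear_combination -h
  have h2 : ∀ n : ℕ, 2 ≤ n → α (n : ℤ) (-(n : ℤ)) = ((n : ℂ) ^ 3 - (n : ℂ)) * c := by
    intro n hn
    induction n, hn using Nat.le_induction with
    | base =>
      push_cast
      have h6 : ((2 : ℂ) ^ 3 - 2) = 6 := by norm_num
      rw [h6, hc]
      ring
    | succ n hn ih =>
      have h := hrec (n : ℤ)
      rw [ih] at h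
      have hne : (1 : ℂ) - (n : ℂ) ≠ 0 := by
        have : (n : ℂ) ≠ 1 := by exact_mod_cast (by omega : n ≠ 1)
        intro hz
        exact this (sub_eq_zero.mp hz).symm
      have key : α ((n : ℤ) + 1) (-((n : ℤ) + 1))
          = (((n : ℂ) + 1) ^ 3 - ((n : ℂ) + 1)) * c := by
        apply mul_left_cancel₀ hne
        linear_combination h
      push_cast
      exact key
  have hnat : ∀ n : ℕ, α (n : ℤ) (-(n : ℤ)) = ((n : ℂ) ^ 3 - (n : ℂ)) * c := by
    intro n
    match n with
    | 0 => norm_num [h00]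
    | 1 => norm_num [h11]
    | (n + 2) => exact h2 (n + 2) (by omega)
  refine ⟨part1, ?_⟩
  intro i
  obtain ⟨n, rfl | rfl⟩ := Int.eq_nat_or_neg i
  · push_cast
    exact hnat n
  · have hs := hskew (-(n : ℤ)) (n : ℤ)
    have hn := hnat n
    rw [neg_neg]
    push_cast
    linear_combination hs - hn
end

section
/- Let g be a finite-dimensional complex Lie algebra, d a derivation of g, V a finite-dimensional g-module on which the action extends to ĝ = ℂ∂ ⋉ g (with [∂,x] = d(x)) by letting ∂ act as a fixed operator P with P(x·v) − x·P(v) = d(x)·v for all x ∈ g, v ∈ V. Fix λ ∈ ℂ. Define on Γ = V ⊗ ℂ[s, s^{−1}] the operators: (x⊗t^a)·(v⊗s^b) = (x·v)⊗s^{a+b} for x ∈ g and a,b ∈ ℤ, and l_j·(v⊗s^b) = ((λ + b)·v + j·P(v))⊗s^{b+j} for j ∈ ℤ. Then these operators define a module structure over L = W ⋉ (g⊗ℂ[t,t^{−1}]), i.e., they satisfy [l_i, l_j]·w = (j−i)·l_{i+j}·w and [l_j, x⊗t^a]·w = (a·x + j·d(x))⊗t^{a+j}·w and [x⊗t^a,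 y⊗t^b]·w = [x,y]⊗t^{a+b}·w for all w ∈ Γ. -/
/-- The loop-module formulas on `Γ = V ⊗ ℂ[s,s⁻¹]` (modelled as `ℤ →₀ V`):
`(x⊗tᵃ)(v⊗sᵇ) = (x·v)⊗s^{a+b}` and `l_j(v⊗sᵇ) = ((λ+b)v + j·P v)⊗s^{b+j}`
define a representation of `L = W ⋉ (g ⊗ ℂ[t,t⁻¹])`. -/
theorem stmt18 (g : Type*) [LieRing g] [LieAlgebra ℂ g] [FiniteDimensional ℂ g]
    (d : g →ₗ[ℂ] g) (hder : ∀ x y : g, d ⁅x, y⁆ = ⁅d x, y⁆ + ⁅x, d y⁆)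
    (V : Type*) [AddCommGroup V] [Module ℂ V] [FiniteDimensional ℂ V]
    [LieRingModule g V] [LieModule ℂ g V]
    (P : V →ₗ[ℂ] V) (hP : ∀ (x : g) (v : V), P ⁅x, v⁆ - ⁅x, P v⁆ = ⁅d x, v⁆)
    (lam : ℂ)
    (X : g → ℤ → ((ℤ →₀ V) →ₗ[ℂ] (ℤ →₀ V)))
    (hX : ∀ (x : g) (a b : ℤ) (v : V),
      X x a (Finsupp.single b v) = Finsupp.single (a + b) ⁅x, v⁆)
    (Lop : ℤ → ((ℤ →₀ V) →ₗ[ℂ] (ℤ →₀ V)))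
    (hL : ∀ (j b : ℤ) (v : V),
      Lop j (Finsupp.single b v) = Finsupp.single (b + j) ((lam + (b : ℂ)) • v + (j : ℂ) • P v)) :
    (∀ (i j : ℤ) (w : ℤ →₀ V),
      Lop i (Lop j w) - Lop j (Lop i w) = ((j : ℂ) - (i : ℂ)) • Lop (i + j) w) ∧
    (∀ (j a : ℤ) (x : g) (w : ℤ →₀ V),
      Lop j (X x a w) - X x a (Lop j w)
        = X ((a : ℤ) • x + (j : ℤ) • d x) (a + j) w) ∧
    (∀ (a b : ℤ) (x y : g) (w : ℤ →₀ V),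
      X x a (X y b w) - X y b (X x a w) = X ⁅x, y⁆ (a + b) w) := by
  refine ⟨?_, ?_, ?_⟩
  · intro i j w
    have h : Lop i ∘ₗ Lop j - Lop j ∘ₗ Lop i = ((j : ℂ) - (i : ℂ)) • Lop (i + j) := by
      apply Finsupp.lhom_ext
      intro b v
      simp only [LinearMap.sub_apply, LinearMap.comp_apply, LinearMap.smul_apply, hL,
        map_add, map_smul, Finsupp.smul_single, ← Finsupp.single_sub]
      have hidx : b + j + i = b + (i + j) := by ring
      have hidx2 : b + i + j = b + (i + j) := by ring
      rw [hidx, hidx2, ← Finsupp.single_sub]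
      congr 1
      push_cast
      module
    calc Lop i (Lop j w) - Lop j (Lop i w)
        = (Lop i ∘ₗ Lop j - Lop j ∘ₗ Lop i) w := by simp
      _ = (((j : ℂ) - (i : ℂ)) • Lop (i + j)) w := by rw [h]
      _ = ((j : ℂ) - (i : ℂ)) • Lop (i + j) w := rfl
  · intro j a x w
    have h : Lop j ∘ₗ X x a - X x a ∘ₗ Lop j = X ((a : ℤ) • x + (j : ℤ) • d x) (a + j) := by
      apply Finsupp.lhom_ext
      intro b v
      simp only [LinearMap.sub_apply, LinearMap.comp_apply, hL, hX, map_add, map_smul]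
      have hidx : a + b + j = a + j + b := by ring
      have hidx2 : a + (b + j) = a + j + b := by ring
      rw [hidx, hidx2, ← Finsupp.single_sub]
      congr 1
      have := hP x v
      have hb : ⁅x, (lam + (b : ℂ)) • v + (j : ℂ) • P v⁆
          = (lam + (b : ℂ)) • ⁅x, v⁆ + (j : ℂ) • ⁅x, P v⁆ := by
        rw [lie_add, lie_smul, lie_smul]
      rw [hb, ← Int.cast_smul_eq_zsmul ℂ a x, ← Int.cast_smul_eq_zsmul ℂ j (d x),
        add_lie, smul_lie, smul_lie, ← this]
      push_cast
      module
    calc Lop j (X x a w) - X x a (Lop j w)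
        = (Lop j ∘ₗ X x a - X x a ∘ₗ Lop j) w := by simp
      _ = X ((a : ℤ) • x + (j : ℤ) • d x) (a + j) w := by rw [h]
  · intro a b x y w
    have h : X x a ∘ₗ X y b - X y b ∘ₗ X x a = X ⁅x, y⁆ (a + b) := by
      apply Finsupp.lhom_ext
      intro c v
      simp only [LinearMap.sub_apply, LinearMap.comp_apply, hX]
      have hidx : a + (b + c) = a + b + c := by ring
      have hidx2 : b + (a + c) = a + b + c := by ring
      rw [hidx, hidx2, ← Finsupp.single_sub]
      congr 1
      rw [lie_lie]
    calc X x a (X y b w) - X y b (X x a w)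
        = (X x a ∘ₗ X y b - X y b ∘ₗ X x a) w := by simp
      _ = X ⁅x, y⁆ (a + b) w := by rw [h]
end
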